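/- arXiv:1604.08909 — 2 statements merged into one kernel-verified Lean document; each statement's English description precedes it below -/
import Mathlib

section
/- Let ℝ×ℝ carry the strict product ordering ≦, and let G be a directed po-group satisfying RDP. Then the lexicographic product (ℝ×ℝ) ×⃗ G satisfies RDP. -/
/-!
A positive element of `(ℝ × ℝ) ×ₗ G` is either `(0, g)` with `0 ≤ g`, or `(α, g)` with both
coordinates of `α` positive, and then it lies above every element of the first kind. So when
`a₁ + a₂ = b₁ + b₂` and `a₁, b₁` or `a₂, b₂` are of different kinds, either the equation is
impossible or `a₁ ≤ b₁` or `b₁ ≤ a₁`, and the refinement matrix `(a₁, 0; -a₁ + b₁, b₂)`, or the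
same with `a` and `b` exchanged, works. Otherwise the kinds agree row by row. If all four
elements are of the second kind, refine the `ℝ × ℝ`-parts by strictly positive elements
(possible because `ℝ` is densely ordered) and let the `G`-parts be arbitrary; if some are of the
first kind, use RDP in `G`, after shifting the `G`-parts of the elements of the second kind into
`G⁺`, which directedness allows.
-/

/-- A po-group satisfies RDP if every equation `a₁ + a₂ = b₁ + b₂` of positive elements
admits a Riesz decomposition by four positive elements. -/
def RDP (G : Type*) [AddGroup G] [PartialOrder G] : Prop :=
  ∀ a₁ a₂ b₁ b₂ : G, 0 ≤ a₁ → 0 ≤ a₂ → 0 ≤ b₁ → 0 ≤ b₂ → a₁ + a₂ = b₁ + b₂ →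
    ∃ c₁₁ c₁₂ c₂₁ c₂₂ : G, 0 ≤ c₁₁ ∧ 0 ≤ c₁₂ ∧ 0 ≤ c₂₁ ∧ 0 ≤ c₂₂ ∧
      a₁ = c₁₁ + c₁₂ ∧ a₂ = c₂₁ + c₂₂ ∧ b₁ = c₁₁ + c₂₁ ∧ b₂ = c₁₂ + c₂₂

/-- `ℝ × ℝ` carrying the strict product ordering. -/
def StrictRR : Type := ℝ × ℝ

instance : AddCommGroup StrictRR := inferInstanceAs (AddCommGroup (ℝ × ℝ))

/-- The strict product ordering: `(a, b) ≦ (c, d)` iff `(a = c ∧ b = d)` or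
`(a < c ∧ b < d)`. -/
instance : PartialOrder StrictRR where
  le x y := x = y ∨ (Prod.fst x < Prod.fst y ∧ Prod.snd x < Prod.snd y)
  le_refl x := Or.inl rfl
  le_trans x y z hxy hyz := by
    rcases hxy with rfl | hxy
    · exact hyz
    · rcases hyz with rfl | hyz
      · exact Or.inr hxy
      · exact Or.inr ⟨lt_trans hxy.1 hyz.1, lt_trans hxy.2 hyz.2⟩
  le_antisymm x y hxy hyx := by
    rcases hxy with rfl | hxy
    · rfl
    · rcases hyx with rfl | hyx
      · rfl
      · exact absurd hyx.1 (lt_asymm hxy.1)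

section Refinement

variable {G : Type*} [AddGroup G]

def IsRefinement (a₁ a₂ b₁ b₂ c₁₁ c₁₂ c₂₁ c₂₂ : G) : Prop :=
  a₁ = c₁₁ + c₁₂ ∧ a₂ = c₂₁ + c₂₂ ∧ b₁ = c₁₁ + c₂₁ ∧ b₂ = c₁₂ + c₂₂

def HasRieszDecomp [PartialOrder G] (a₁ a₂ b₁ b₂ : G) : Prop :=
  ∃ c₁₁ c₁₂ c₂₁ c₂₂ : G, 0 ≤ c₁₁ ∧ 0 ≤ c₁₂ ∧ 0 ≤ c₂₁ ∧ 0 ≤ c₂₂ ∧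
    IsRefinement a₁ a₂ b₁ b₂ c₁₁ c₁₂ c₂₁ c₂₂

theorem rdp_iff [PartialOrder G] : RDP G ↔ ∀ a₁ a₂ b₁ b₂ : G, 0 ≤ a₁ → 0 ≤ a₂ → 0 ≤ b₁ →
    0 ≤ b₂ → a₁ + a₂ = b₁ + b₂ → HasRieszDecomp a₁ a₂ b₁ b₂ :=
  Iff.rfl

theorem isRefinement_neg_add {a₁ a₂ b₁ b₂ : G} (h : a₁ + a₂ = b₁ + b₂) :
    IsRefinement a₁ a₂ b₁ b₂ a₁ 0 (-a₁ + b₁) b₂ :=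
  ⟨(add_zero a₁).symm, by rw [add_assoc, ← h, neg_add_cancel_left],
    (add_neg_cancel_left a₁ b₁).symm, (zero_add b₂).symm⟩

theorem IsRefinement.transpose {a₁ a₂ b₁ b₂ c₁₁ c₁₂ c₂₁ c₂₂ : G}
    (h : IsRefinement a₁ a₂ b₁ b₂ c₁₁ c₁₂ c₂₁ c₂₂) :
    IsRefinement b₁ b₂ a₁ a₂ c₁₁ c₂₁ c₁₂ c₂₂ :=
  ⟨h.2.2.1, h.2.2.2, h.1, h.2.1⟩

theorem HasRieszDecomp.symm [PartialOrder G] {a₁ a₂ b₁ b₂ : G}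
    (h : HasRieszDecomp a₁ a₂ b₁ b₂) : HasRieszDecomp b₁ b₂ a₁ a₂ :=
  let ⟨c₁₁, c₁₂, c₂₁, c₂₂, h₁₁, h₁₂, h₂₁, h₂₂, hc⟩ := h
  ⟨c₁₁, c₂₁, c₁₂, c₂₂, h₁₁, h₂₁, h₁₂, h₂₂, hc.transpose⟩

theorem hasRieszDecomp_of_nonneg_neg_add [PartialOrder G] {a₁ a₂ b₁ b₂ : G} (ha₁ : 0 ≤ a₁)
    (hb₂ : 0 ≤ b₂) (hab : 0 ≤ -a₁ + b₁) (h : a₁ + a₂ = b₁ + b₂) : HasRieszDecomp a₁ a₂ b₁ b₂ :=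
  ⟨_, _, _, _, ha₁, le_rfl, hab, hb₂, isRefinement_neg_add h⟩

theorem IsRefinement.of_add_right {a₁ a₂ b₁ b₂ c₁₁ c₁₂ c₂₁ c₂₂ w : G}
    (h : IsRefinement a₁ (a₂ + w) b₁ (b₂ + w) c₁₁ c₁₂ c₂₁ c₂₂) :
    IsRefinement a₁ a₂ b₁ b₂ c₁₁ c₁₂ c₂₁ (c₂₂ + -w) := by
  obtain ⟨h₁, h₂, h₃, h₄⟩ := h
  refine ⟨h₁, ?_, h₃, ?_⟩
  · rw [← add_assoc, ← h₂, add_neg_cancel_right]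
  · rw [← add_assoc, ← h₄, add_neg_cancel_right]

theorem IsRefinement.of_add_left {a₁ a₂ b₁ b₂ c₁₁ c₁₂ c₂₁ c₂₂ w : G}
    (h : IsRefinement (w + a₁) a₂ (w + b₁) b₂ c₁₁ c₁₂ c₂₁ c₂₂) :
    IsRefinement a₁ a₂ b₁ b₂ (-w + c₁₁) c₁₂ c₂₁ c₂₂ := by
  obtain ⟨h₁, h₂, h₃, h₄⟩ := h
  refine ⟨?_, h₂, ?_, h₄⟩
  · rw [add_assoc, ← h₁, neg_add_cancel_left]
  · rw [add_assoc, ← h₃, neg_add_cancel_left]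

theorem IsRefinement.prodMk {H : Type*} [AddGroup H] {a₁ a₂ b₁ b₂ c₁₁ c₁₂ c₂₁ c₂₂ : G}
    {a₁' a₂' b₁' b₂' c₁₁' c₁₂' c₂₁' c₂₂' : H} (h : IsRefinement a₁ a₂ b₁ b₂ c₁₁ c₁₂ c₂₁ c₂₂)
    (h' : IsRefinement a₁' a₂' b₁' b₂' c₁₁' c₁₂' c₂₁' c₂₂') :
    IsRefinement (a₁, a₁') (a₂, a₂') (b₁, b₁') (b₂, b₂')
      (c₁₁, c₁₁') (c₁₂, c₁₂') (c₂₁, c₂₁') (c₂₂, c₂₂') := by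
  obtain ⟨rfl, rfl, rfl, rfl⟩ := h
  obtain ⟨rfl, rfl, rfl, rfl⟩ := h'
  exact ⟨rfl, rfl, rfl, rfl⟩

section Directed

variable [PartialOrder G] [IsDirectedOrder G]

/-- Shift `a₂` and `b₂` by a common upper bound `w` of `-a₂` and `-b₂`, decompose, and shift
`c₂₂` back. -/
theorem RDP.exists_refinement_of_nonneg_left [AddLeftMono G] (hG : RDP G) {a₁ a₂ b₁ b₂ : G}
    (ha₁ : 0 ≤ a₁) (hb₁ : 0 ≤ b₁) (h : a₁ + a₂ = b₁ + b₂) :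
    ∃ c₁₁ c₁₂ c₂₁ c₂₂ : G, 0 ≤ c₁₁ ∧ 0 ≤ c₁₂ ∧ 0 ≤ c₂₁ ∧
      IsRefinement a₁ a₂ b₁ b₂ c₁₁ c₁₂ c₂₁ c₂₂ := by
  obtain ⟨w, haw, hbw⟩ := exists_ge_ge (-a₂) (-b₂)
  obtain ⟨c₁₁, c₁₂, c₂₁, c₂₂, h₁₁, h₁₂, h₂₁, -, hc⟩ :=
    rdp_iff.1 hG a₁ (a₂ + w) b₁ (b₂ + w) ha₁ (neg_le_iff_add_nonneg'.1 haw) hb₁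
      (neg_le_iff_add_nonneg'.1 hbw) (by rw [← add_assoc, h, add_assoc])
  exact ⟨c₁₁, c₁₂, c₂₁, _, h₁₁, h₁₂, h₂₁, hc.of_add_right⟩

theorem RDP.exists_refinement_of_nonneg_right [AddRightMono G] (hG : RDP G) {a₁ a₂ b₁ b₂ : G}
    (ha₂ : 0 ≤ a₂) (hb₂ : 0 ≤ b₂) (h : a₁ + a₂ = b₁ + b₂) :
    ∃ c₁₁ c₁₂ c₂₁ c₂₂ : G, 0 ≤ c₁₂ ∧ 0 ≤ c₂₁ ∧ 0 ≤ c₂₂ ∧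
      IsRefinement a₁ a₂ b₁ b₂ c₁₁ c₁₂ c₂₁ c₂₂ := by
  obtain ⟨w, haw, hbw⟩ := exists_ge_ge (-a₁) (-b₁)
  obtain ⟨c₁₁, c₁₂, c₂₁, c₂₂, -, h₁₂, h₂₁, h₂₂, hc⟩ :=
    rdp_iff.1 hG (w + a₁) a₂ (w + b₁) b₂ (neg_le_iff_add_nonneg.1 haw) ha₂
      (neg_le_iff_add_nonneg.1 hbw) hb₂ (by rw [add_assoc, h, add_assoc])
  exact ⟨_, c₁₂, c₂₁, c₂₂, h₁₂, h₂₁, h₂₂, hc.of_add_left⟩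

end Directed

end Refinement

def StrictRDP (A : Type*) [AddGroup A] [PartialOrder A] : Prop :=
  ∀ a₁ a₂ b₁ b₂ : A, 0 < a₁ → 0 < a₂ → 0 < b₁ → 0 < b₂ → a₁ + a₂ = b₁ + b₂ →
    ∃ c₁₁ c₁₂ c₂₁ c₂₂ : A, 0 < c₁₁ ∧ 0 < c₁₂ ∧ 0 < c₂₁ ∧ 0 < c₂₂ ∧
      IsRefinement a₁ a₂ b₁ b₂ c₁₁ c₁₂ c₂₁ c₂₂

namespace Prod.Lex

variable {A G : Type*} [AddGroup A] [AddGroup G] [PartialOrder A] [PartialOrder G]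

theorem toLex_mk_nonneg_iff {α : A} {g : G} : 0 ≤ toLex (α, g) ↔ 0 < α ∨ α = 0 ∧ 0 ≤ g := by
  rw [← toLex_zero, toLex_le_toLex]
  exact or_congr_right (and_congr_left' eq_comm)

theorem toLex_mk_nonneg_of_pos {α : A} (hα : 0 < α) (g : G) : 0 ≤ toLex (α, g) :=
  toLex_mk_nonneg_iff.2 (.inl hα)

theorem toLex_zero_mk_nonneg {g : G} (hg : 0 ≤ g) : 0 ≤ toLex ((0 : A), g) :=
  toLex_mk_nonneg_iff.2 (.inr ⟨rfl, hg⟩)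

theorem hasRieszDecomp_of_neg_add_pos {a₁ a₂ b₁ b₂ : A × G} (ha₁ : 0 ≤ toLex a₁)
    (hb₂ : 0 ≤ toLex b₂) (hab : 0 < -a₁.1 + b₁.1)
    (h : toLex a₁ + toLex a₂ = toLex b₁ + toLex b₂) :
    HasRieszDecomp (toLex a₁) (toLex a₂) (toLex b₁) (toLex b₂) :=
  hasRieszDecomp_of_nonneg_neg_add ha₁ hb₂ (toLex_mk_nonneg_of_pos hab _) h

theorem hasRieszDecomp_toLex_zero (hG : RDP G) {g₁ g₂ h₁ h₂ : G} (hg₁ : 0 ≤ g₁) (hg₂ : 0 ≤ g₂)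
    (hh₁ : 0 ≤ h₁) (hh₂ : 0 ≤ h₂) (h : g₁ + g₂ = h₁ + h₂) :
    HasRieszDecomp (toLex ((0 : A), g₁)) (toLex ((0 : A), g₂)) (toLex ((0 : A), h₁))
      (toLex ((0 : A), h₂)) := by
  obtain ⟨k₁₁, k₁₂, k₂₁, k₂₂, h₁₁, h₁₂, h₂₁, h₂₂, hk⟩ := rdp_iff.1 hG _ _ _ _ hg₁ hg₂ hh₁ hh₂ h
  exact ⟨_, _, _, _, toLex_zero_mk_nonneg h₁₁, toLex_zero_mk_nonneg h₁₂,
    toLex_zero_mk_nonneg h₂₁, toLex_zero_mk_nonneg h₂₂,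
    IsRefinement.prodMk (by simp only [IsRefinement, add_zero, and_self]) hk⟩

theorem hasRieszDecomp_toLex_zero_pos [AddLeftMono G] [IsDirectedOrder G] (hG : RDP G)
    {α : A} {g₁ g₂ h₁ h₂ : G} (hg₁ : 0 ≤ g₁) (hh₁ : 0 ≤ h₁) (hα : 0 < α)
    (h : g₁ + g₂ = h₁ + h₂) :
    HasRieszDecomp (toLex (0, g₁)) (toLex (α, g₂)) (toLex (0, h₁)) (toLex (α, h₂)) := by
  obtain ⟨k₁₁, k₁₂, k₂₁, k₂₂, h₁₁, h₁₂, h₂₁, hk⟩ := hG.exists_refinement_of_nonneg_left hg₁ hh₁ h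
  exact ⟨_, _, _, _, toLex_zero_mk_nonneg h₁₁, toLex_zero_mk_nonneg h₁₂,
    toLex_zero_mk_nonneg h₂₁, toLex_mk_nonneg_of_pos hα _,
    IsRefinement.prodMk (by simp only [IsRefinement, add_zero, zero_add, and_self]) hk⟩

theorem hasRieszDecomp_toLex_pos_zero [AddRightMono G] [IsDirectedOrder G] (hG : RDP G)
    {α : A} {g₁ g₂ h₁ h₂ : G} (hα : 0 < α) (hg₂ : 0 ≤ g₂) (hh₂ : 0 ≤ h₂)
    (h : g₁ + g₂ = h₁ + h₂) :
    HasRieszDecomp (toLex (α, g₁)) (toLex (0, g₂)) (toLex (α, h₁)) (toLex (0, h₂)) := by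
  obtain ⟨k₁₁, k₁₂, k₂₁, k₂₂, h₁₂, h₂₁, h₂₂, hk⟩ := hG.exists_refinement_of_nonneg_right hg₂ hh₂ h
  exact ⟨_, _, _, _, toLex_mk_nonneg_of_pos hα _, toLex_zero_mk_nonneg h₁₂,
    toLex_zero_mk_nonneg h₂₁, toLex_zero_mk_nonneg h₂₂,
    IsRefinement.prodMk (by simp only [IsRefinement, add_zero, and_self]) hk⟩

theorem hasRieszDecomp_toLex_pos (hA : StrictRDP A) {α₁ α₂ β₁ β₂ : A} (hα₁ : 0 < α₁)
    (hα₂ : 0 < α₂) (hβ₁ : 0 < β₁) (hβ₂ : 0 < β₂) (hα : α₁ + α₂ = β₁ + β₂) {g₁ g₂ h₁ h₂ : G}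
    (h : g₁ + g₂ = h₁ + h₂) :
    HasRieszDecomp (toLex (α₁, g₁)) (toLex (α₂, g₂)) (toLex (β₁, h₁)) (toLex (β₂, h₂)) := by
  obtain ⟨γ₁₁, γ₁₂, γ₂₁, γ₂₂, h₁₁, h₁₂, h₂₁, h₂₂, hγ⟩ := hA _ _ _ _ hα₁ hα₂ hβ₁ hβ₂ hα
  exact ⟨_, _, _, _, toLex_mk_nonneg_of_pos h₁₁ _, toLex_mk_nonneg_of_pos h₁₂ _,
    toLex_mk_nonneg_of_pos h₂₁ _, toLex_mk_nonneg_of_pos h₂₂ _,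
    IsRefinement.prodMk hγ (isRefinement_neg_add h)⟩

theorem rdp_of_strictRDP [AddLeftMono G] [AddRightMono G] [IsDirectedOrder G] (hA : StrictRDP A)
    (hG : RDP G) : RDP (A ×ₗ G) := by
  intro a₁ a₂ b₁ b₂ ha₁ ha₂ hb₁ hb₂ h
  obtain ⟨⟨α₁, g₁⟩, rfl⟩ := toLex.surjective a₁
  obtain ⟨⟨α₂, g₂⟩, rfl⟩ := toLex.surjective a₂
  obtain ⟨⟨β₁, h₁⟩, rfl⟩ := toLex.surjective b₁
  obtain ⟨⟨β₂, h₂⟩, rfl⟩ := toLex.surjective b₂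
  have hα : α₁ + α₂ = β₁ + β₂ := congrArg (fun x ↦ (ofLex x).1) h
  have hg : g₁ + g₂ = h₁ + h₂ := congrArg (fun x ↦ (ofLex x).2) h
  rcases toLex_mk_nonneg_iff.1 ha₁ with hα₁ | ⟨rfl, hg₁⟩ <;>
    rcases toLex_mk_nonneg_iff.1 hb₁ with hβ₁ | ⟨rfl, hh₁⟩
  · rcases toLex_mk_nonneg_iff.1 ha₂ with hα₂ | ⟨rfl, hg₂⟩ <;>
      rcases toLex_mk_nonneg_iff.1 hb₂ with hβ₂ | ⟨rfl, hh₂⟩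
    · exact hasRieszDecomp_toLex_pos hA hα₁ hα₂ hβ₁ hβ₂ hα hg
    · rw [add_zero] at hα
      exact hasRieszDecomp_of_neg_add_pos ha₁ hb₂ (by simpa [← hα] using hα₂) h
    · rw [add_zero] at hα
      exact (hasRieszDecomp_of_neg_add_pos hb₁ ha₂ (by simpa [hα] using hβ₂) h.symm).symm
    · obtain rfl : α₁ = β₁ := by simpa using hα
      exact hasRieszDecomp_toLex_pos_zero hG hα₁ hg₂ hh₂ hg
  · exact (hasRieszDecomp_of_neg_add_pos hb₁ ha₂ (by simpa using hα₁) h.symm).symm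
  · exact hasRieszDecomp_of_neg_add_pos ha₁ hb₂ (by simpa using hβ₁) h
  · rcases toLex_mk_nonneg_iff.1 ha₂ with hα₂ | ⟨rfl, hg₂⟩ <;>
      rcases toLex_mk_nonneg_iff.1 hb₂ with hβ₂ | ⟨rfl, hh₂⟩
    · obtain rfl : α₂ = β₂ := by simpa using hα
      exact hasRieszDecomp_toLex_zero_pos hG hg₁ hh₁ hα₂ hg
    · exact absurd (by simpa using hα : α₂ = 0) hα₂.ne'
    · exact absurd (by simpa using hα : (0 : A) = β₂) hβ₂.ne
    · exact hasRieszDecomp_toLex_zero hG hg₁ hg₂ hh₁ hh₂ hg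

end Prod.Lex

/-- For `0 < aᵢ, bⱼ`, pick `c₁₁` strictly between `max 0 (b₁ - a₂)` and `min a₁ b₁`; the other
entries are then forced and strictly positive. -/
theorem strictRDP_of_denselyOrdered {K : Type*} [AddCommGroup K] [LinearOrder K]
    [IsOrderedAddMonoid K] [DenselyOrdered K] : StrictRDP K := by
  intro a₁ a₂ b₁ b₂ ha₁ ha₂ hb₁ hb₂ h
  have hb₂' : b₂ = a₁ + a₂ - b₁ := eq_sub_of_add_eq' h.symm
  have hba : b₁ - a₂ < a₁ := sub_lt_iff_lt_add.2 (h ▸ lt_add_of_pos_right b₁ hb₂)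
  obtain ⟨t, hlo, hhi⟩ : ∃ t, max 0 (b₁ - a₂) < t ∧ t < min a₁ b₁ :=
    exists_between (max_lt (lt_min ha₁ hb₁) (lt_min hba (sub_lt_self b₁ ha₂)))
  rw [max_lt_iff] at hlo
  rw [lt_min_iff] at hhi
  exact ⟨t, a₁ - t, b₁ - t, t - (b₁ - a₂), hlo.1, sub_pos.2 hhi.1, sub_pos.2 hhi.2,
    sub_pos.2 hlo.2, by abel, by abel, by abel, by rw [hb₂']; abel⟩

theorem StrictRR.pos_iff {x : StrictRR} : 0 < x ↔ 0 < x.1 ∧ 0 < x.2 := by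
  refine ⟨fun hx ↦ ?_, fun hx ↦ lt_of_le_of_ne (Or.inr hx) fun h ↦ hx.1.ne (congrArg Prod.fst h)⟩
  rcases hx.le with h | h
  · exact absurd h hx.ne
  · exact h

theorem StrictRR.strictRDP : StrictRDP StrictRR := by
  intro a₁ a₂ b₁ b₂ ha₁ ha₂ hb₁ hb₂ h
  simp only [StrictRR.pos_iff] at ha₁ ha₂ hb₁ hb₂
  obtain ⟨c₁₁, c₁₂, c₂₁, c₂₂, h₁₁, h₁₂, h₂₁, h₂₂, hc⟩ := strictRDP_of_denselyOrdered
    _ _ _ _ ha₁.1 ha₂.1 hb₁.1 hb₂.1 (congrArg Prod.fst h)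
  obtain ⟨d₁₁, d₁₂, d₂₁, d₂₂, k₁₁, k₁₂, k₂₁, k₂₂, hd⟩ := strictRDP_of_denselyOrdered
    _ _ _ _ ha₁.2 ha₂.2 hb₁.2 hb₂.2 (congrArg Prod.snd h)
  exact ⟨(c₁₁, d₁₁), (c₁₂, d₁₂), (c₂₁, d₂₁), (c₂₂, d₂₂), StrictRR.pos_iff.2 ⟨h₁₁, k₁₁⟩,
    StrictRR.pos_iff.2 ⟨h₁₂, k₁₂⟩, StrictRR.pos_iff.2 ⟨h₂₁, k₂₁⟩, StrictRR.pos_iff.2 ⟨h₂₂, k₂₂⟩,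
    hc.prodMk hd⟩

/-- If `ℝ × ℝ` carries the strict product ordering and `G` is a directed
po-group satisfying RDP, then the lexicographic product `(ℝ × ℝ) ×ₗ G` satisfies RDP. -/
theorem rdp_lex_strictRR {G : Type*} [AddGroup G] [PartialOrder G]
    [CovariantClass G G (· + ·) (· ≤ ·)]
    [CovariantClass G G (Function.swap (· + ·)) (· ≤ ·)]
    (hdir : ∀ x y : G, ∃ z : G, x ≤ z ∧ y ≤ z)
    (hG : RDP G) :
    RDP (StrictRR ×ₗ G) :=
  have : IsDirectedOrder G := ⟨hdir⟩
  Prod.Lex.rdp_of_strictRDP StrictRR.strictRDP hG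
end

section
/- Let A be a po-group and G a com-directed po-group. Then the lexicographic product A ×⃗ G satisfies RDP if and only if both A and G satisfy RDP. -/
/-- A po-group is com-directed if every two elements have a lower bound lying in the
center. -/
def ComDirected (G : Type*) [AddGroup G] [PartialOrder G] : Prop :=
  ∀ x y : G, ∃ d : G, (∀ z : G, d + z = z + d) ∧ d ≤ x ∧ d ≤ y

/-!
Positivity in `A ×ₗ G` only constrains the `G`-part of an element whose `A`-part is `0`. So a
Riesz decomposition of `x₁ + x₂ = y₁ + y₂` is built by first decomposing the `A`-parts, and then
decomposing the `G`-parts with the pieces over a nonzero `A`-piece only bounded below by a central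
`t ≤ 0` that lies below all `G`-parts involved (com-directedness). Subtracting central lower bounds
turns such a bounded decomposition into a positive one, where RDP of `G` applies. Conversely, `A`
and `G` sit in `A ×ₗ G` as `a ↦ (a, 0)` and `g ↦ (0, g)`, and the projections carry Riesz
decompositions back.
-/

theorem ComDirected.exists_central_lowerBound {G : Type*} [AddGroup G] [PartialOrder G]
    (hcd : ComDirected G) (l : List G) : ∃ d : G, (∀ z, AddCommute d z) ∧ ∀ x ∈ l, d ≤ x := by
  induction l with
  | nil => exact ⟨0, AddCommute.zero_left, by simp⟩
  | cons x l ih =>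
    obtain ⟨d, -, hdl⟩ := ih
    obtain ⟨e, he, hex, hed⟩ := hcd x d
    exact ⟨e, he, List.forall_mem_cons.2 ⟨hex, fun y hy => hed.trans (hdl y hy)⟩⟩

theorem RDP.of_leftInverse {H K : Type*} [AddGroup H] [PartialOrder H]
    [AddGroup K] [PartialOrder K] [AddLeftMono K] [AddRightMono K] (hK : RDP K)
    (f : H →+ K) (π : K →+ H) (hπf : Function.LeftInverse π f) (hf : Monotone f)
    (hπ : ∀ a x, 0 ≤ x → x ≤ f a → 0 ≤ π x) : RDP H := by
  intro a₁ a₂ b₁ b₂ ha₁ ha₂ hb₁ hb₂ heq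
  have hf₀ {a : H} (ha : 0 ≤ a) : 0 ≤ f a := map_zero f ▸ hf ha
  obtain ⟨c₁₁, c₁₂, c₂₁, c₂₂, h₁₁, h₁₂, h₂₁, h₂₂, e₁, e₂, e₃, e₄⟩ :=
    hK (f a₁) (f a₂) (f b₁) (f b₂) (hf₀ ha₁) (hf₀ ha₂) (hf₀ hb₁) (hf₀ hb₂)
      (by rw [← map_add, ← map_add, heq])
  refine ⟨π c₁₁, π c₁₂, π c₂₁, π c₂₂,
    hπ a₁ _ h₁₁ (e₁ ▸ le_add_of_nonneg_right h₁₂), hπ a₁ _ h₁₂ (e₁ ▸ le_add_of_nonneg_left h₁₁),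
    hπ a₂ _ h₂₁ (e₂ ▸ le_add_of_nonneg_right h₂₂), hπ a₂ _ h₂₂ (e₂ ▸ le_add_of_nonneg_left h₂₁),
    ?_, ?_, ?_, ?_⟩ <;>
  simp only [← map_add, ← e₁, ← e₂, ← e₃, ← e₄, hπf _]

section POGroup

variable {G : Type*} [AddGroup G] [PartialOrder G] [AddRightMono G]

theorem RDP.exists_decomp_of_central_le (hG : RDP G) {g₁ g₂ h₁ h₂ v₁₁ v₁₂ v₂₁ v₂₂ : G}
    (hv₁₁ : ∀ z, AddCommute v₁₁ z) (hv₁₂ : ∀ z, AddCommute v₁₂ z)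
    (hv₂₁ : ∀ z, AddCommute v₂₁ z)
    (hg₁ : v₁₁ + v₁₂ ≤ g₁) (hg₂ : v₂₁ + v₂₂ ≤ g₂) (hh₁ : v₁₁ + v₂₁ ≤ h₁) (hh₂ : v₁₂ + v₂₂ ≤ h₂)
    (heq : g₁ + g₂ = h₁ + h₂) :
    ∃ d₁₁ d₁₂ d₂₁ d₂₂ : G, v₁₁ ≤ d₁₁ ∧ v₁₂ ≤ d₁₂ ∧ v₂₁ ≤ d₂₁ ∧ v₂₂ ≤ d₂₂ ∧
      g₁ = d₁₁ + d₁₂ ∧ g₂ = d₂₁ + d₂₂ ∧ h₁ = d₁₁ + d₂₁ ∧ h₂ = d₁₂ + d₂₂ := by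
  have hv {a b : G} (ha : ∀ z, AddCommute a z) (hb : ∀ z, AddCommute b z) (z : G) :
      AddCommute (a + b) z := (ha z).add_left (hb z)
  have hsum : g₁ - (v₁₁ + v₁₂) + (g₂ - (v₂₁ + v₂₂)) = h₁ - (v₁₁ + v₂₁) + (h₂ - (v₁₂ + v₂₂)) := by
    rw [(hv hv₁₁ hv₁₂ _).sub_add_sub_comm (hv hv₁₁ hv₁₂ _).neg_left,
      (hv hv₁₁ hv₂₁ _).sub_add_sub_comm (hv hv₁₁ hv₂₁ _).neg_left, heq,
      (hv₁₂ v₂₁).add_add_add_comm]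
  obtain ⟨e₁₁, e₁₂, e₂₁, e₂₂, he₁₁, he₁₂, he₂₁, he₂₂, r₁, r₂, r₃, r₄⟩ :=
    hG _ _ _ _ (sub_nonneg.2 hg₁) (sub_nonneg.2 hg₂) (sub_nonneg.2 hh₁) (sub_nonneg.2 hh₂) hsum
  refine ⟨e₁₁ + v₁₁, e₁₂ + v₁₂, e₂₁ + v₂₁, e₂₂ + v₂₂, le_add_of_nonneg_left he₁₁,
    le_add_of_nonneg_left he₁₂, le_add_of_nonneg_left he₂₁, le_add_of_nonneg_left he₂₂,
    ?_, ?_, ?_, ?_⟩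
  · rw [(hv₁₁ e₁₂).add_add_add_comm, ← r₁, sub_add_cancel]
  · rw [(hv₂₁ e₂₂).add_add_add_comm, ← r₂, sub_add_cancel]
  · rw [(hv₁₁ e₂₁).add_add_add_comm, ← r₃, sub_add_cancel]
  · rw [(hv₁₂ e₂₂).add_add_add_comm, ← r₄, sub_add_cancel]

theorem ite_add_ite_le {t g : G} (ht : t ≤ 0) (htg : t ≤ g) {p q : Prop} [Decidable p]
    [Decidable q] (hpq : p → q → 0 ≤ g) :
    (if p then 0 else t) + (if q then 0 else t) ≤ g := by
  split_ifs with hp hq hq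
  · simpa using hpq hp hq
  · simpa using htg
  · simpa using htg
  · exact (add_le_of_nonpos_left ht).trans htg

end POGroup

section Lex

theorem Prod.Lex.toLex_add_toLex {A G : Type*} [Add A] [Add G] (a b : A) (g h : G) :
    toLex (a, g) + toLex (b, h) = toLex (a + b, g + h) := rfl

variable {A G : Type*} [AddGroup A] [PartialOrder A] [AddGroup G] [PartialOrder G]

theorem Prod.Lex.toLex_nonneg_iff {a : A} {g : G} :
    0 ≤ toLex (a, g) ↔ 0 ≤ a ∧ (a = 0 → 0 ≤ g) := by
  rw [← toLex_zero, ← Prod.mk_zero_zero, Prod.Lex.toLex_le_toLex']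
  simp only [eq_comm]

theorem RDP.lex [AddRightMono G] (hA : RDP A) (hG : RDP G) (hcd : ComDirected G) :
    RDP (A ×ₗ G) := by
  classical
  intro x₁ x₂ y₁ y₂ hx₁ hx₂ hy₁ hy₂ heq
  obtain ⟨⟨a₁, g₁⟩, rfl⟩ := toLex.surjective x₁
  obtain ⟨⟨a₂, g₂⟩, rfl⟩ := toLex.surjective x₂
  obtain ⟨⟨b₁, h₁⟩, rfl⟩ := toLex.surjective y₁
  obtain ⟨⟨b₂, h₂⟩, rfl⟩ := toLex.surjective y₂
  simp only [Prod.Lex.toLex_nonneg_iff] at hx₁ hx₂ hy₁ hy₂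
  simp only [Prod.Lex.toLex_add_toLex, toLex_inj, Prod.mk.injEq] at heq
  obtain ⟨c₁₁, c₁₂, c₂₁, c₂₂, hc₁₁, hc₁₂, hc₂₁, hc₂₂, ra₁, ra₂, rb₁, rb₂⟩ :=
    hA a₁ a₂ b₁ b₂ hx₁.1 hx₂.1 hy₁.1 hy₂.1 heq.1
  obtain ⟨t, ht, htle⟩ := hcd.exists_central_lowerBound [0, g₁, g₂, h₁, h₂]
  simp only [List.forall_mem_cons] at htle
  obtain ⟨ht₀, htg₁, htg₂, hth₁, hth₂, -⟩ := htle
  -- the `G`-part of a piece may go below `0` exactly when its `A`-part is nonzero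
  let v (c : A) : G := if c = 0 then 0 else t
  have hv (c : A) : ∀ z, AddCommute (v c) z := by
    unfold v
    split_ifs
    exacts [AddCommute.zero_left, ht]
  have hv_le {a c c' : A} {g : G} (ha : a = 0 → 0 ≤ g) (hacc : a = c + c') (htg : t ≤ g) :
      v c + v c' ≤ g :=
    ite_add_ite_le ht₀ htg fun h h' => ha (by rw [hacc, h, h', add_zero])
  obtain ⟨d₁₁, d₁₂, d₂₁, d₂₂, hd₁₁, hd₁₂, hd₂₁, hd₂₂, rg₁, rg₂, rh₁, rh₂⟩ :=
    hG.exists_decomp_of_central_le (hv c₁₁) (hv c₁₂) (hv c₂₁) (hv_le hx₁.2 ra₁ htg₁)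
      (hv_le hx₂.2 ra₂ htg₂) (hv_le hy₁.2 rb₁ hth₁) (hv_le hy₂.2 rb₂ hth₂) heq.2
  have hnonneg {c : A} {d : G} (hc : 0 ≤ c) (hd : v c ≤ d) : 0 ≤ toLex (c, d) :=
    Prod.Lex.toLex_nonneg_iff.2 ⟨hc, fun h => by simpa [v, h] using hd⟩
  refine ⟨toLex (c₁₁, d₁₁), toLex (c₁₂, d₁₂), toLex (c₂₁, d₂₁), toLex (c₂₂, d₂₂),
    hnonneg hc₁₁ hd₁₁, hnonneg hc₁₂ hd₁₂, hnonneg hc₂₁ hd₂₁, hnonneg hc₂₂ hd₂₂, ?_, ?_, ?_, ?_⟩ <;>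
  simp only [Prod.Lex.toLex_add_toLex, ra₁, ra₂, rb₁, rb₂, rg₁, rg₂, rh₁, rh₂]

instance [AddLeftMono A] [AddLeftMono G] : AddLeftMono (A ×ₗ G) where
  elim z x y hxy := by
    rcases Prod.Lex.le_iff.1 hxy with h | ⟨h₁, h₂⟩
    · exact Prod.Lex.le_iff.2 (Or.inl (add_lt_add_right h _))
    · exact Prod.Lex.le_iff.2 (Or.inr ⟨by simp [h₁], add_le_add_right h₂ _⟩)

instance [AddRightMono A] [AddRightMono G] : AddRightMono (A ×ₗ G) where
  elim z x y hxy := by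
    rcases Prod.Lex.le_iff.1 hxy with h | ⟨h₁, h₂⟩
    · exact Prod.Lex.le_iff.2 (Or.inl (add_lt_add_left h _))
    · exact Prod.Lex.le_iff.2 (Or.inr ⟨by simp [h₁], add_le_add_left h₂ _⟩)

variable [AddLeftMono A] [AddRightMono A] [AddLeftMono G] [AddRightMono G]

theorem RDP.of_lex_fst (h : RDP (A ×ₗ G)) : RDP A :=
  h.of_leftInverse (OrderAddMonoidHom.inlₗ A G) (OrderAddMonoidHom.fstₗ A G) (fun _ => rfl)
    (OrderHomClass.mono (OrderAddMonoidHom.inlₗ A G)) fun _ _ hx _ =>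
      OrderHomClass.mono (OrderAddMonoidHom.fstₗ A G) hx

theorem RDP.of_lex_snd (h : RDP (A ×ₗ G)) : RDP G :=
  h.of_leftInverse (OrderAddMonoidHom.inrₗ A G)
    ((AddMonoidHom.snd A G).comp (ofLexAddEquiv (A × G)).toAddMonoidHom) (fun _ => rfl)
    (OrderHomClass.mono (OrderAddMonoidHom.inrₗ A G)) fun _ _ hx hxg =>
      (Prod.Lex.le_iff'.1 hx).2 (le_antisymm (Prod.Lex.le_iff'.1 hx).1 (Prod.Lex.le_iff'.1 hxg).1)

end Lex

/-- If `A` is a po-group and `G` is a com-directed po-group, then the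
lexicographic product `A ×ₗ G` satisfies RDP iff both `A` and `G` satisfy RDP. -/
theorem rdp_lex_iff_comDirected {A G : Type*}
    [AddGroup A] [PartialOrder A]
    [CovariantClass A A (· + ·) (· ≤ ·)]
    [CovariantClass A A (Function.swap (· + ·)) (· ≤ ·)]
    [AddGroup G] [PartialOrder G]
    [CovariantClass G G (· + ·) (· ≤ ·)]
    [CovariantClass G G (Function.swap (· + ·)) (· ≤ ·)]
    (hcd : ComDirected G) :
    RDP (A ×ₗ G) ↔ RDP A ∧ RDP G :=
  ⟨fun h => ⟨h.of_lex_fst, h.of_lex_snd⟩, fun ⟨hA, hG⟩ => hA.lex hG hcd⟩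
end
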